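/- arXiv:1901.06014 — 5 statements merged into one kernel-verified Lean document; each statement's English description precedes it below -/
import Mathlib

section
/- For every field F, every formal power series f over F, and all natural numbers l and m, there exists a Padé pair of type (l, m) for f; that is, there exist polynomials P and Q over F with Q ≠ 0, deg P ≤ l, deg Q ≤ m, such that the formal power series f·Q − P has all coefficients of z^k equal to zero for every k ≤ l + m. -/
/-- **Existence of Padé pairs.** For every field `F`, every formal power series `f` over `F`,
and all natural numbers `l` and `m`, there exists a Padé pair of type `(l, m)` for `f`:
polynomials `P` and `Q` with `Q ≠ 0`, `deg P ≤ l`, `deg Q ≤ m`, such that every coefficient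
of `z^k` in `f·Q − P` vanishes for `k ≤ l + m`. -/
theorem pade_pair_exists (F : Type*) [Field F] (f : PowerSeries F) (l m : ℕ) :
    ∃ P Q : Polynomial F, Q ≠ 0 ∧ P.degree ≤ (l : ℕ) ∧ Q.degree ≤ (m : ℕ) ∧
      ∀ k : ℕ, k ≤ l + m →
        PowerSeries.coeff (R := F) k (f * (Q : PowerSeries F) - (P : PowerSeries F)) = 0 := by
  classical
  set A : Matrix (Fin m) (Fin (m + 1)) F := fun i j =>
    if (j : ℕ) ≤ l + 1 + (i : ℕ) then
      PowerSeries.coeff (R := F) (l + 1 + (i : ℕ) - (j : ℕ)) f else 0 with hA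
  obtain ⟨c, hcker, hc0⟩ :
      ∃ c, c ∈ LinearMap.ker A.mulVecLin ∧ c ≠ 0 := by
    have h : LinearMap.ker A.mulVecLin ≠ ⊥ := by
      apply LinearMap.ker_ne_bot_of_finrank_lt
      simp [Module.finrank_pi]
    exact (Submodule.ne_bot_iff _).1 h
  set Q : Polynomial F := ∑ j : Fin (m + 1), Polynomial.C (c j) * Polynomial.X ^ (j : ℕ)
    with hQdef
  have hQcoeff : ∀ j : Fin (m + 1), Q.coeff (j : ℕ) = c j := by
    intro j
    rw [hQdef, Polynomial.finset_sum_coeff]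
    simp only [Polynomial.coeff_C_mul, Polynomial.coeff_X_pow]
    rw [Finset.sum_eq_single j]
    · simp
    · intro b _ hb
      have : (j : ℕ) ≠ (b : ℕ) := fun h => hb (Fin.ext h.symm)
      simp [this]
    · simp
  have hQzero : ∀ n, m < n → Q.coeff n = 0 := by
    intro n hn
    rw [hQdef, Polynomial.finset_sum_coeff]
    apply Finset.sum_eq_zero
    intro j _
    have : n ≠ (j : ℕ) := by omega
    simp [Polynomial.coeff_X_pow, this]
  -- the generic coefficient of f * Q
  have hmul : ∀ k : ℕ, PowerSeries.coeff (R := F) k (f * (Q : PowerSeries F)) =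
      ∑ j : Fin (m + 1),
        (if (j : ℕ) ≤ k then PowerSeries.coeff (R := F) (k - (j : ℕ)) f * c j else 0) := by
    intro k
    rw [PowerSeries.coeff_mul]
    simp only [Polynomial.coeff_coe]
    rw [Finset.Nat.sum_antidiagonal_eq_sum_range_succ
        (fun a b => PowerSeries.coeff (R := F) a f * Q.coeff b)]
    have h1 : ∑ i ∈ Finset.range (k + 1),
        PowerSeries.coeff (R := F) i f * Q.coeff (k - i) =
        ∑ j ∈ Finset.range (k + 1),
        PowerSeries.coeff (R := F) (k - j) f * Q.coeff j := by
      rw [← Finset.sum_range_reflect]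
      apply Finset.sum_congr rfl
      intro i hi
      simp only [Finset.mem_range] at hi
      congr 2 <;> omega
    rw [h1]
    have h2 : ∀ N, k + 1 ≤ N → m + 1 ≤ N →
        ∑ j ∈ Finset.range (k + 1), PowerSeries.coeff (R := F) (k - j) f * Q.coeff j =
        ∑ j ∈ Finset.range N,
          (if j ≤ k then PowerSeries.coeff (R := F) (k - j) f * Q.coeff j else 0) := by
      intro N hN1 hN2
      rw [← Finset.sum_subset (Finset.range_subset_range.2 hN1) (fun j _ hj => by
        simp only [Finset.mem_range, not_lt] at hj
        rw [if_neg (by omega)])]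
      apply Finset.sum_congr rfl
      intro j hj
      simp only [Finset.mem_range] at hj
      rw [if_pos (by omega)]
    rw [h2 (max (k + 1) (m + 1)) (le_max_left _ _) (le_max_right _ _)]
    have h3 : ∑ j : Fin (m + 1),
        (if (j : ℕ) ≤ k then PowerSeries.coeff (R := F) (k - (j : ℕ)) f * c j else 0) =
        ∑ j ∈ Finset.range (m + 1),
          (if j ≤ k then PowerSeries.coeff (R := F) (k - j) f * Q.coeff j else 0) := by
      rw [← Fin.sum_univ_eq_sum_range
        (fun j => if j ≤ k then PowerSeries.coeff (R := F) (k - j) f * Q.coeff j else 0)]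
      apply Finset.sum_congr rfl
      intro j _
      rw [hQcoeff j]
    rw [h3]
    symm
    apply Finset.sum_subset (Finset.range_subset_range.2 (le_max_right (k+1) (m+1)))
    intro j _ hj
    simp only [Finset.mem_range, not_lt] at hj
    simp [hQzero j (by omega)]
  -- the kernel condition gives vanishing coefficients in the middle range
  have hker : ∀ i : Fin m,
      PowerSeries.coeff (R := F) (l + 1 + (i : ℕ)) (f * (Q : PowerSeries F)) = 0 := by
    intro i
    rw [hmul]
    have := congrFun (LinearMap.mem_ker.1 hcker) i
    rw [Matrix.mulVecLin_apply] at this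
    simp only [Pi.zero_apply] at this
    simp only [Matrix.mulVec, dotProduct] at this
    have heq : ∑ j : Fin (m + 1),
        (if (j : ℕ) ≤ l + 1 + (i : ℕ) then
          PowerSeries.coeff (R := F) (l + 1 + (i : ℕ) - (j : ℕ)) f * c j else 0) =
        ∑ x : Fin (m + 1), A i x * c x := by
      apply Finset.sum_congr rfl
      intro j _
      simp only [hA]
      by_cases h : (j : ℕ) ≤ l + 1 + (i : ℕ)
      · rw [if_pos h, if_pos h]
      · rw [if_neg h, if_neg h, zero_mul]
    rw [heq, this]
  refine ⟨PowerSeries.trunc (l + 1) (f * (Q : PowerSeries F)), Q, ?_, ?_, ?_, ?_⟩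
  · intro hQ0
    apply hc0
    funext j
    rw [← hQcoeff j, hQ0]
    simp
  · rw [Polynomial.degree_le_iff_coeff_zero]
    intro n hn
    have hn' : l < n := by exact_mod_cast hn
    rw [PowerSeries.coeff_trunc, if_neg (by omega)]
  · rw [hQdef]
    apply Polynomial.degree_sum_le _ _ |>.trans
    apply Finset.sup_le
    intro j _
    apply (Polynomial.degree_C_mul_X_pow_le _ _).trans
    exact_mod_cast Nat.cast_le.2 (Nat.lt_succ_iff.1 j.isLt)
  · intro k hk
    rw [map_sub, Polynomial.coeff_coe, PowerSeries.coeff_trunc]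
    by_cases h : k < l + 1
    · rw [if_pos h, sub_self]
    · rw [if_neg h, sub_zero]
      have hi : k - (l + 1) < m := by omega
      have := hker ⟨k - (l + 1), hi⟩
      simpa [show l + 1 + (k - (l + 1)) = k by omega] using this
end

section
/- (Wynn's identity, the 'missing identity of Frobenius'.) Let F be a field, f a formal power series over F, and l ≥ 1, m ≥ 1 natural numbers. For each of the five index pairs (i, j) ∈ {(l, m), (l, m−1), (l, m+1), (l−1, m), (l+1, m)} suppose (P_{ij}, Q_{ij}) is a normalized Padé pair of type (i, j) for f (so Q_{ij}(0) = 1) which is normal, meaning the coefficient of z^{i+j+1} in f·Q_{ij} − P_{ij} is nonzero. Let z ∈ F satisfy Q_{ij}(z) ≠ 0 for all five pairs, and set C = P_{l,m}(z)/Q_{l,m}(z), N = P_{l,m−1}(z)/Q_{l,m−1}(z), S = P_{l,m+1}(z)/Q_{l,m+1}(z), E = P_{l+1,m}(z)/Q_{l+1,m}(z), W = P_{l−1,m}(z)/Q_{l−1,m}(z). If N ≠ C, S ≠ C, E ≠ C and W ≠ C, then 1/(S − C) + 1/(N − C) = 1/(E − C) + 1/(W − C). -/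
open Polynomial

section WynnHelpers

variable {F : Type*} [Field F]

private lemma wynn_coeff_mul_lt (e g : PowerSeries F) (n k : ℕ)
    (h : ∀ j < n, PowerSeries.coeff j e = 0) (hk : k < n) :
    PowerSeries.coeff k (e * g) = 0 := by
  rw [PowerSeries.coeff_mul]
  refine Finset.sum_eq_zero fun p hp => ?_
  rw [Finset.HasAntidiagonal.mem_antidiagonal] at hp
  rw [h p.1 (by omega), zero_mul]

private lemma wynn_coeff_mul_top (e g : PowerSeries F) (n : ℕ)
    (h : ∀ j < n, PowerSeries.coeff j e = 0) :
    PowerSeries.coeff n (e * g) =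
      PowerSeries.coeff n e * PowerSeries.coeff 0 g := by
  rw [PowerSeries.coeff_mul]
  refine Finset.sum_eq_single (n, 0) (fun p hp hne => ?_) (fun h' => absurd ?_ h')
  · rw [Finset.HasAntidiagonal.mem_antidiagonal] at hp
    have hlt : p.1 < n := by
      rcases Nat.lt_or_ge p.1 n with h1 | h1
      · exact h1
      · exfalso
        apply hne
        have e1 : p.1 = n := by omega
        have e2 : p.2 = 0 := by omega
        exact Prod.ext e1 e2
    rw [h p.1 hlt, zero_mul]
  · simp [Finset.mem_antidiagonal]

private lemma wynn_cross_coe (f : PowerSeries F) (P1 Q1 P2 Q2 : Polynomial F) :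
    ((P1 * Q2 - P2 * Q1 : Polynomial F) : PowerSeries F)
      = (f * (Q2 : PowerSeries F) - (P2 : PowerSeries F)) * (Q1 : PowerSeries F)
        - (f * (Q1 : PowerSeries F) - (P1 : PowerSeries F)) * (Q2 : PowerSeries F) := by
  push_cast
  ring

private lemma wynn_cross_coeff_lo (f : PowerSeries F) (P1 Q1 P2 Q2 : Polynomial F) (n : ℕ)
    (h1 : ∀ k < n, PowerSeries.coeff k (f * (Q1 : PowerSeries F) - (P1 : PowerSeries F)) = 0)
    (h2 : ∀ k < n, PowerSeries.coeff k (f * (Q2 : PowerSeries F) - (P2 : PowerSeries F)) = 0) :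
    ∀ k < n, (P1 * Q2 - P2 * Q1).coeff k = 0 := by
  intro k hk
  rw [← Polynomial.coeff_coe, wynn_cross_coe f, map_sub,
    wynn_coeff_mul_lt _ _ n k h2 hk, wynn_coeff_mul_lt _ _ n k h1 hk, sub_zero]

private lemma wynn_cross_coeff_hi (f : PowerSeries F) (P1 Q1 P2 Q2 : Polynomial F) (n : ℕ)
    (h1 : ∀ k < n, PowerSeries.coeff k (f * (Q1 : PowerSeries F) - (P1 : PowerSeries F)) = 0)
    (h2 : ∀ k < n, PowerSeries.coeff k (f * (Q2 : PowerSeries F) - (P2 : PowerSeries F)) = 0) :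
    (P1 * Q2 - P2 * Q1).coeff n
      = PowerSeries.coeff n (f * (Q2 : PowerSeries F) - (P2 : PowerSeries F)) * Q1.coeff 0
        - PowerSeries.coeff n (f * (Q1 : PowerSeries F) - (P1 : PowerSeries F)) * Q2.coeff 0 := by
  rw [← Polynomial.coeff_coe, wynn_cross_coe f, map_sub,
    wynn_coeff_mul_top _ _ n h2, wynn_coeff_mul_top _ _ n h1]
  simp

private lemma wynn_deg_mul_le (P Q : Polynomial F) (a b n : ℕ)
    (hP : P.degree ≤ (a : ℕ)) (hQ : Q.degree ≤ (b : ℕ)) (hab : a + b ≤ n) :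
    (P * Q).degree ≤ (n : ℕ) :=
  (degree_mul_le _ _).trans (le_trans (add_le_add hP hQ) (by exact_mod_cast hab))

private lemma wynn_cross_deg (P1 Q1 P2 Q2 : Polynomial F) (a b c d n : ℕ)
    (h1 : P1.degree ≤ (a : ℕ)) (h2 : Q1.degree ≤ (b : ℕ))
    (h3 : P2.degree ≤ (c : ℕ)) (h4 : Q2.degree ≤ (d : ℕ))
    (had : a + d ≤ n) (hcb : c + b ≤ n) :
    (P1 * Q2 - P2 * Q1).degree ≤ (n : ℕ) :=
  (degree_sub_le _ _).trans (max_le (wynn_deg_mul_le _ _ _ _ _ h1 h4 had)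
    (wynn_deg_mul_le _ _ _ _ _ h3 h2 hcb))

private lemma wynn_shape0 (D : Polynomial F) (n : ℕ) (hd : D.degree ≤ (n : ℕ))
    (h : ∀ k < n, D.coeff k = 0) :
    D = C (D.coeff n) * X ^ n := by
  ext k
  rcases lt_trichotomy k n with hk | hk | hk
  · rw [h k hk, coeff_C_mul, coeff_X_pow, if_neg (by omega), mul_zero]
  · subst hk
    rw [coeff_C_mul, coeff_X_pow, if_pos rfl, mul_one]
  · rw [Polynomial.coeff_eq_zero_of_degree_lt (lt_of_le_of_lt hd (by exact_mod_cast hk)),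
      coeff_C_mul, coeff_X_pow, if_neg (by omega), mul_zero]

private lemma wynn_shape1 (D : Polynomial F) (n : ℕ) (hd : D.degree ≤ ((n + 1 : ℕ) : ℕ))
    (h : ∀ k < n, D.coeff k = 0) :
    D = C (D.coeff n) * X ^ n + C (D.coeff (n + 1)) * X ^ (n + 1) := by
  ext k
  rw [coeff_add, coeff_C_mul, coeff_C_mul, coeff_X_pow, coeff_X_pow]
  rcases lt_trichotomy k n with hk | hk | hk
  · rw [h k hk, if_neg (by omega), if_neg (by omega)]
    ring
  · subst hk
    rw [if_pos rfl, if_neg (by omega)]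
    ring
  · rcases Nat.eq_or_lt_of_le (Nat.succ_le_of_lt hk) with hk1 | hk1
    · rw [← hk1, if_neg (by omega), if_pos rfl]
      ring
    · rw [Polynomial.coeff_eq_zero_of_degree_lt (lt_of_le_of_lt hd (by exact_mod_cast hk1)),
        if_neg (by omega), if_neg (by omega)]
      ring

end WynnHelpers



/-- A Padé pair of type `(l, m)` for the formal power series `f`: polynomials `P`, `Q`
with `Q ≠ 0`, `deg P ≤ l`, `deg Q ≤ m`, such that the coefficient of `z^k` in `f·Q − P`
vanishes for all `k ≤ l + m`. -/
def IsPadePair (F : Type*) [Field F] (f : PowerSeries F) (l m : ℕ)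
    (P Q : Polynomial F) : Prop :=
  Q ≠ 0 ∧ P.degree ≤ (l : ℕ) ∧ Q.degree ≤ (m : ℕ) ∧
    ∀ k : ℕ, k ≤ l + m →
      PowerSeries.coeff k (f * (Q : PowerSeries F) - (P : PowerSeries F)) = 0

/-- A normalized, normal (non-degenerate) Padé pair of type `(l, m)` for `f`:
a Padé pair with `Q(0) = 1` whose residual `f·Q − P` has nonzero coefficient of
`z^(l+m+1)`. -/
def IsNormalPadePair (F : Type*) [Field F] (f : PowerSeries F) (l m : ℕ)
    (P Q : Polynomial F) : Prop :=
  IsPadePair F f l m P Q ∧ Q.eval 0 = 1 ∧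
    PowerSeries.coeff (l + m + 1) (f * (Q : PowerSeries F) - (P : PowerSeries F)) ≠ 0

/-- **Wynn's identity (the "missing identity of Frobenius").** With `C, N, S, E, W` the
values at `z` of normalized normal Padé approximants of types `(l,m)`, `(l,m−1)`,
`(l,m+1)`, `(l+1,m)`, `(l−1,m)` respectively, if all four differences are nonzero then
`1/(S − C) + 1/(N − C) = 1/(E − C) + 1/(W − C)`. -/
theorem wynn_identity (F : Type*) [Field F] (f : PowerSeries F) (l m : ℕ)
    (hl : 1 ≤ l) (hm : 1 ≤ m)
    (P_C Q_C P_N Q_N P_S Q_S P_E Q_E P_W Q_W : Polynomial F)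
    (hC : IsNormalPadePair F f l m P_C Q_C)
    (hN : IsNormalPadePair F f l (m - 1) P_N Q_N)
    (hS : IsNormalPadePair F f l (m + 1) P_S Q_S)
    (hE : IsNormalPadePair F f (l + 1) m P_E Q_E)
    (hW : IsNormalPadePair F f (l - 1) m P_W Q_W)
    (z : F)
    (hzC : Q_C.eval z ≠ 0) (hzN : Q_N.eval z ≠ 0) (hzS : Q_S.eval z ≠ 0)
    (hzE : Q_E.eval z ≠ 0) (hzW : Q_W.eval z ≠ 0)
    (C N S E W : F)
    (hCdef : C = P_C.eval z / Q_C.eval z)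
    (hNdef : N = P_N.eval z / Q_N.eval z)
    (hSdef : S = P_S.eval z / Q_S.eval z)
    (hEdef : E = P_E.eval z / Q_E.eval z)
    (hWdef : W = P_W.eval z / Q_W.eval z)
    (hNC : N ≠ C) (hSC : S ≠ C) (hEC : E ≠ C) (hWC : W ≠ C) :
    1 / (S - C) + 1 / (N - C) = 1 / (E - C) + 1 / (W - C) := by
  obtain ⟨⟨hQC0, hPCd, hQCd, hCv⟩, hQC1, hrC0⟩ := hC
  obtain ⟨⟨hQN0, hPNd, hQNd, hNv⟩, hQN1, hrN0⟩ := hN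
  obtain ⟨⟨hQS0, hPSd, hQSd, hSv⟩, hQS1, hrS0⟩ := hS
  obtain ⟨⟨hQE0, hPEd, hQEd, hEv⟩, hQE1, hrE0⟩ := hE
  obtain ⟨⟨hQW0, hPWd, hQWd, hWv⟩, hQW1, hrW0⟩ := hW
  -- constant coefficients
  have hc0C : Q_C.coeff 0 = 1 := by rwa [Polynomial.coeff_zero_eq_eval_zero]
  have hc0N : Q_N.coeff 0 = 1 := by rwa [Polynomial.coeff_zero_eq_eval_zero]
  have hc0S : Q_S.coeff 0 = 1 := by rwa [Polynomial.coeff_zero_eq_eval_zero]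
  have hc0E : Q_E.coeff 0 = 1 := by rwa [Polynomial.coeff_zero_eq_eval_zero]
  have hc0W : Q_W.coeff 0 = 1 := by rwa [Polynomial.coeff_zero_eq_eval_zero]
  -- z ≠ 0
  have hz0 : z ≠ 0 := by
    intro hz
    subst hz
    apply hNC
    have eC := hCv 0 (by omega)
    have eN := hNv 0 (by omega)
    rw [map_sub] at eC eN
    rw [PowerSeries.coeff_zero_eq_constantCoeff, map_mul, Polynomial.constantCoeff_coe,
      Polynomial.constantCoeff_coe, hc0C, mul_one] at eC
    rw [PowerSeries.coeff_zero_eq_constantCoeff, map_mul, Polynomial.constantCoeff_coe,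
      Polynomial.constantCoeff_coe, hc0N, mul_one] at eN
    rw [hNdef, hCdef, ← Polynomial.coeff_zero_eq_eval_zero, ← Polynomial.coeff_zero_eq_eval_zero,
      ← Polynomial.coeff_zero_eq_eval_zero, ← Polynomial.coeff_zero_eq_eval_zero,
      hc0N, hc0C]
    rw [sub_eq_zero] at eC eN
    rw [← eC, ← eN]
  -- residual coefficients
  set rC := PowerSeries.coeff (l + m + 1)
      (f * (Q_C : PowerSeries F) - (P_C : PowerSeries F)) with hrCdef
  set rN := PowerSeries.coeff (l + m)
      (f * (Q_N : PowerSeries F) - (P_N : PowerSeries F)) with hrNdef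
  set rW := PowerSeries.coeff (l + m)
      (f * (Q_W : PowerSeries F) - (P_W : PowerSeries F)) with hrWdef
  have hrCne : rC ≠ 0 := hrC0
  have hrNne : rN ≠ 0 := by
    have h1 : l + (m - 1) + 1 = l + m := by omega
    rwa [h1] at hrN0
  have hrWne : rW ≠ 0 := by
    have h1 : l - 1 + m + 1 = l + m := by omega
    rwa [h1] at hrW0
  -- vanishing in strict form
  have hCv' : ∀ k < l + m + 1,
      PowerSeries.coeff k (f * (Q_C : PowerSeries F) - (P_C : PowerSeries F)) = 0 :=
    fun k hk => hCv k (by omega)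
  have hNv' : ∀ k < l + m,
      PowerSeries.coeff k (f * (Q_N : PowerSeries F) - (P_N : PowerSeries F)) = 0 :=
    fun k hk => hNv k (by omega)
  have hWv' : ∀ k < l + m,
      PowerSeries.coeff k (f * (Q_W : PowerSeries F) - (P_W : PowerSeries F)) = 0 :=
    fun k hk => hWv k (by omega)
  have hSv' : ∀ k < l + m + 2,
      PowerSeries.coeff k (f * (Q_S : PowerSeries F) - (P_S : PowerSeries F)) = 0 :=
    fun k hk => hSv k (by omega)
  have hEv' : ∀ k < l + m + 2,
      PowerSeries.coeff k (f * (Q_E : PowerSeries F) - (P_E : PowerSeries F)) = 0 :=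
    fun k hk => hEv k (by omega)
  have hSv1 : ∀ k < l + m + 1,
      PowerSeries.coeff k (f * (Q_S : PowerSeries F) - (P_S : PowerSeries F)) = 0 :=
    fun k hk => hSv' k (by omega)
  have hEv1 : ∀ k < l + m + 1,
      PowerSeries.coeff k (f * (Q_E : PowerSeries F) - (P_E : PowerSeries F)) = 0 :=
    fun k hk => hEv' k (by omega)
  have hCvm : ∀ k < l + m,
      PowerSeries.coeff k (f * (Q_C : PowerSeries F) - (P_C : PowerSeries F)) = 0 :=
    fun k hk => hCv' k (by omega)
  have hSvm : ∀ k < l + m,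
      PowerSeries.coeff k (f * (Q_S : PowerSeries F) - (P_S : PowerSeries F)) = 0 :=
    fun k hk => hSv' k (by omega)
  have hEvm : ∀ k < l + m,
      PowerSeries.coeff k (f * (Q_E : PowerSeries F) - (P_E : PowerSeries F)) = 0 :=
    fun k hk => hEv' k (by omega)
  -- bracket CS
  have sCS : P_C * Q_S - P_S * Q_C = -(Polynomial.C rC * X ^ (l + m + 1)) := by
    have hv : (P_C * Q_S - P_S * Q_C).coeff (l + m + 1) = -rC := by
      rw [wynn_cross_coeff_hi f P_C Q_C P_S Q_S (l + m + 1) hCv' hSv1,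
        hSv (l + m + 1) (by omega), hc0S, hc0C]
      ring
    have h0 := wynn_shape0 _ _ (wynn_cross_deg P_C Q_C P_S Q_S l m l (m + 1) (l + m + 1)
      hPCd hQCd hPSd hQSd (by omega) (by omega))
      (wynn_cross_coeff_lo f P_C Q_C P_S Q_S (l + m + 1) hCv' hSv1)
    rw [hv, map_neg, neg_mul] at h0
    exact h0
  -- bracket CE
  have sCE : P_C * Q_E - P_E * Q_C = -(Polynomial.C rC * X ^ (l + m + 1)) := by
    have hv : (P_C * Q_E - P_E * Q_C).coeff (l + m + 1) = -rC := by
      rw [wynn_cross_coeff_hi f P_C Q_C P_E Q_E (l + m + 1) hCv' hEv1,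
        hEv (l + m + 1) (by omega), hc0E, hc0C]
      ring
    have h0 := wynn_shape0 _ _ (wynn_cross_deg P_C Q_C P_E Q_E l m (l + 1) m (l + m + 1)
      hPCd hQCd hPEd hQEd (by omega) (by omega))
      (wynn_cross_coeff_lo f P_C Q_C P_E Q_E (l + m + 1) hCv' hEv1)
    rw [hv, map_neg, neg_mul] at h0
    exact h0
  -- bracket NC
  have sNC : P_N * Q_C - P_C * Q_N = -(Polynomial.C rN * X ^ (l + m)) := by
    have hv : (P_N * Q_C - P_C * Q_N).coeff (l + m) = -rN := by
      rw [wynn_cross_coeff_hi f P_N Q_N P_C Q_C (l + m) hNv' hCvm,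
        hCv (l + m) (by omega), hc0N, hc0C]
      ring
    have h0 := wynn_shape0 _ _ (wynn_cross_deg P_N Q_N P_C Q_C l (m - 1) l m (l + m)
      hPNd hQNd hPCd hQCd (by omega) (by omega))
      (wynn_cross_coeff_lo f P_N Q_N P_C Q_C (l + m) hNv' hCvm)
    rw [hv, map_neg, neg_mul] at h0
    exact h0
  -- bracket WC
  have sWC : P_W * Q_C - P_C * Q_W = -(Polynomial.C rW * X ^ (l + m)) := by
    have hv : (P_W * Q_C - P_C * Q_W).coeff (l + m) = -rW := by
      rw [wynn_cross_coeff_hi f P_W Q_W P_C Q_C (l + m) hWv' hCvm,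
        hCv (l + m) (by omega), hc0W, hc0C]
      ring
    have h0 := wynn_shape0 _ _ (wynn_cross_deg P_W Q_W P_C Q_C (l - 1) m l m (l + m)
      hPWd hQWd hPCd hQCd (by omega) (by omega))
      (wynn_cross_coeff_lo f P_W Q_W P_C Q_C (l + m) hWv' hCvm)
    rw [hv, map_neg, neg_mul] at h0
    exact h0
  -- bracket WS
  have sWS : P_W * Q_S - P_S * Q_W = -(Polynomial.C rW * X ^ (l + m)) := by
    have hv : (P_W * Q_S - P_S * Q_W).coeff (l + m) = -rW := by
      rw [wynn_cross_coeff_hi f P_W Q_W P_S Q_S (l + m) hWv' hSvm,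
        hSv (l + m) (by omega), hc0W, hc0S]
      ring
    have h0 := wynn_shape0 _ _ (wynn_cross_deg P_W Q_W P_S Q_S (l - 1) m l (m + 1) (l + m)
      hPWd hQWd hPSd hQSd (by omega) (by omega))
      (wynn_cross_coeff_lo f P_W Q_W P_S Q_S (l + m) hWv' hSvm)
    rw [hv, map_neg, neg_mul] at h0
    exact h0
  -- bracket NW
  have sNW : P_N * Q_W - P_W * Q_N = Polynomial.C (rW - rN) * X ^ (l + m) := by
    have hv : (P_N * Q_W - P_W * Q_N).coeff (l + m) = rW - rN := by
      rw [wynn_cross_coeff_hi f P_N Q_N P_W Q_W (l + m) hNv' hWv', hc0N, hc0W]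
      ring
    rw [← hv]
    refine wynn_shape0 _ _ ?_ (wynn_cross_coeff_lo f P_N Q_N P_W Q_W (l + m) hNv' hWv')
    exact wynn_cross_deg P_N Q_N P_W Q_W l (m - 1) (l - 1) m (l + m)
      hPNd hQNd hPWd hQWd (by omega) (by omega)
  -- bracket ES  (coefficient left abstract)
  set γ := (P_E * Q_S - P_S * Q_E).coeff (l + m + 2) with hγdef
  have sES : P_E * Q_S - P_S * Q_E = Polynomial.C γ * X ^ (l + m + 2) := by
    refine wynn_shape0 _ _ ?_ (wynn_cross_coeff_lo f P_E Q_E P_S Q_S (l + m + 2) hEv' hSv')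
    exact wynn_cross_deg P_E Q_E P_S Q_S (l + 1) m l (m + 1) (l + m + 2)
      hPEd hQEd hPSd hQSd (by omega) (by omega)
  -- bracket NE (coefficient abstract)
  set ν := (P_N * Q_E - P_E * Q_N).coeff (l + m) with hνdef
  have sNE : P_N * Q_E - P_E * Q_N = Polynomial.C ν * X ^ (l + m) := by
    refine wynn_shape0 _ _ ?_ (wynn_cross_coeff_lo f P_N Q_N P_E Q_E (l + m) hNv' hEvm)
    exact wynn_cross_deg P_N Q_N P_E Q_E l (m - 1) (l + 1) m (l + m)
      hPNd hQNd hPEd hQEd (by omega) (by omega)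
  -- bracket EW (two abstract coefficients)
  set φ := (P_E * Q_W - P_W * Q_E).coeff (l + m) with hφdef
  set ψ := (P_E * Q_W - P_W * Q_E).coeff (l + m + 1) with hψdef
  have sEW : P_E * Q_W - P_W * Q_E = Polynomial.C φ * X ^ (l + m) + Polynomial.C ψ * X ^ (l + m + 1) := by
    refine wynn_shape1 _ _ ?_ (wynn_cross_coeff_lo f P_E Q_E P_W Q_W (l + m) hEvm hWv')
    exact wynn_cross_deg P_E Q_E P_W Q_W (l + 1) m (l - 1) m (l + m + 1)
      hPEd hQEd hPWd hQWd (by omega) (by omega)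
  -- Plücker identity 1: quadruple (E, W, S, C)
  have p1 : -((P_E * Q_W - P_W * Q_E) * (P_C * Q_S - P_S * Q_C))
      - (P_E * Q_S - P_S * Q_E) * (P_W * Q_C - P_C * Q_W)
      - (P_C * Q_E - P_E * Q_C) * (P_W * Q_S - P_S * Q_W) = 0 := by ring
  rw [sEW, sCS, sES, sWC, sCE, sWS] at p1
  have p1' : (X : Polynomial F) ^ (2 * (l + m) + 1) *
      (Polynomial.C φ * Polynomial.C rC - Polynomial.C rC * Polynomial.C rW + (Polynomial.C ψ * Polynomial.C rC + Polynomial.C γ * Polynomial.C rW) * X) = 0 := by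
    linear_combination p1
  have q1 : (Polynomial.C φ * Polynomial.C rC - Polynomial.C rC * Polynomial.C rW + (Polynomial.C ψ * Polynomial.C rC + Polynomial.C γ * Polynomial.C rW) * X : Polynomial F) = 0 :=
    (mul_eq_zero.mp p1').resolve_left (pow_ne_zero _ Polynomial.X_ne_zero)
  have e12 : ψ * rC + γ * rW = 0 := by
    have h1 := congrArg (fun p => Polynomial.coeff p 1) q1
    simpa [coeff_C_mul, coeff_X, mul_comm] using h1
  -- Plücker identity 2: quadruple (N, E, W, C)
  have p2 : (P_N * Q_E - P_E * Q_N) * (P_W * Q_C - P_C * Q_W)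
      + (P_N * Q_W - P_W * Q_N) * (P_C * Q_E - P_E * Q_C)
      + (P_N * Q_C - P_C * Q_N) * (P_E * Q_W - P_W * Q_E) = 0 := by ring
  rw [sNE, sWC, sNW, sCE, sNC, sEW] at p2
  have p2' : (X : Polynomial F) ^ (2 * (l + m)) *
      ((Polynomial.C ν * Polynomial.C rW + Polynomial.C rN * Polynomial.C φ) + (Polynomial.C (rW - rN) * Polynomial.C rC + Polynomial.C rN * Polynomial.C ψ) * X) = 0 := by
    linear_combination -p2
  have q2 : ((Polynomial.C ν * Polynomial.C rW + Polynomial.C rN * Polynomial.C φ) + (Polynomial.C (rW - rN) * Polynomial.C rC + Polynomial.C rN * Polynomial.C ψ) * X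
      : Polynomial F) = 0 :=
    (mul_eq_zero.mp p2').resolve_left (pow_ne_zero _ Polynomial.X_ne_zero)
  have e22 : (rW - rN) * rC + rN * ψ = 0 := by
    have h1 := congrArg (fun p => Polynomial.coeff p 1) q2
    simpa [coeff_C_mul, coeff_X, mul_comm] using h1
  have hgam : γ * (rN * rW) = rC ^ 2 * (rW - rN) := by
    linear_combination rN * e12 - rC * e22
  -- evaluation identities
  have E1 : P_C.eval z * Q_S.eval z - P_S.eval z * Q_C.eval z = -(rC * z ^ (l + m + 1)) := by
    have h1 := congrArg (Polynomial.eval z) sCS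
    simpa using h1
  have E2 : P_C.eval z * Q_E.eval z - P_E.eval z * Q_C.eval z = -(rC * z ^ (l + m + 1)) := by
    have h1 := congrArg (Polynomial.eval z) sCE
    simpa using h1
  have E3 : P_N.eval z * Q_C.eval z - P_C.eval z * Q_N.eval z = -(rN * z ^ (l + m)) := by
    have h1 := congrArg (Polynomial.eval z) sNC
    simpa using h1
  have E4 : P_W.eval z * Q_C.eval z - P_C.eval z * Q_W.eval z = -(rW * z ^ (l + m)) := by
    have h1 := congrArg (Polynomial.eval z) sWC
    simpa using h1
  have E5 : P_N.eval z * Q_W.eval z - P_W.eval z * Q_N.eval z = (rW - rN) * z ^ (l + m) := by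
    have h1 := congrArg (Polynomial.eval z) sNW
    simpa using h1
  have E6 : P_E.eval z * Q_S.eval z - P_S.eval z * Q_E.eval z = γ * z ^ (l + m + 2) := by
    have h1 := congrArg (Polynomial.eval z) sES
    simpa using h1
  have hzp : z ^ (l + m) ≠ 0 := pow_ne_zero _ hz0
  have hzp1 : z ^ (l + m + 1) ≠ 0 := pow_ne_zero _ hz0
  -- the two key scalar relations
  have hac : rC * (Q_S.eval z - Q_E.eval z) = γ * z * Q_C.eval z := by
    have key : z ^ (l + m + 1) * (rC * (Q_S.eval z - Q_E.eval z))
        = z ^ (l + m + 1) * (γ * z * Q_C.eval z) := by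
      linear_combination (-(Q_E.eval z)) * E1 + Q_S.eval z * E2 + Q_C.eval z * E6
    exact mul_left_cancel₀ hzp1 key
  have hbd : rW * Q_N.eval z - rN * Q_W.eval z = (rW - rN) * Q_C.eval z := by
    have key : z ^ (l + m) * (rW * Q_N.eval z - rN * Q_W.eval z)
        = z ^ (l + m) * ((rW - rN) * Q_C.eval z) := by
      linear_combination (-(Q_W.eval z)) * E3 + Q_N.eval z * E4 + Q_C.eval z * E5
    exact mul_left_cancel₀ hzp key
  have main : rN * rW * (Q_S.eval z - Q_E.eval z)
      = rC * z * (rW * Q_N.eval z - rN * Q_W.eval z) := by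
    have key : rC * (rN * rW * (Q_S.eval z - Q_E.eval z))
        = rC * (rC * z * (rW * Q_N.eval z - rN * Q_W.eval z)) := by
      linear_combination rN * rW * hac - rC ^ 2 * z * hbd + z * Q_C.eval z * hgam
    exact mul_left_cancel₀ hrCne key
  -- difference formulas
  have dS : S - C = rC * z ^ (l + m + 1) / (Q_S.eval z * Q_C.eval z) := by
    rw [hSdef, hCdef, div_sub_div _ _ hzS hzC,
      show P_S.eval z * Q_C.eval z - Q_S.eval z * P_C.eval z = rC * z ^ (l + m + 1) by
        linear_combination -E1]
  have dE : E - C = rC * z ^ (l + m + 1) / (Q_E.eval z * Q_C.eval z) := by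
    rw [hEdef, hCdef, div_sub_div _ _ hzE hzC,
      show P_E.eval z * Q_C.eval z - Q_E.eval z * P_C.eval z = rC * z ^ (l + m + 1) by
        linear_combination -E2]
  have dN : N - C = -(rN * z ^ (l + m)) / (Q_N.eval z * Q_C.eval z) := by
    rw [hNdef, hCdef, div_sub_div _ _ hzN hzC,
      show P_N.eval z * Q_C.eval z - Q_N.eval z * P_C.eval z = -(rN * z ^ (l + m)) by
        linear_combination E3]
  have dW : W - C = -(rW * z ^ (l + m)) / (Q_W.eval z * Q_C.eval z) := by
    rw [hWdef, hCdef, div_sub_div _ _ hzW hzC,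
      show P_W.eval z * Q_C.eval z - Q_W.eval z * P_C.eval z = -(rW * z ^ (l + m)) by
        linear_combination E4]
  -- final assembly
  have L : 1 / (S - C) - 1 / (E - C)
      = Q_C.eval z * (Q_S.eval z - Q_E.eval z) / (rC * z ^ (l + m + 1)) := by
    rw [dS, dE, one_div_div, one_div_div]
    ring
  have R : 1 / (W - C) - 1 / (N - C)
      = Q_C.eval z * (rW * Q_N.eval z - rN * Q_W.eval z) / (rN * rW * z ^ (l + m)) := by
    rw [dW, dN, one_div_div, one_div_div]
    field_simp
    ring
  have LR : Q_C.eval z * (Q_S.eval z - Q_E.eval z) / (rC * z ^ (l + m + 1))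
      = Q_C.eval z * (rW * Q_N.eval z - rN * Q_W.eval z) / (rN * rW * z ^ (l + m)) := by
    rw [div_eq_div_iff (mul_ne_zero hrCne hzp1) (mul_ne_zero (mul_ne_zero hrNne hrWne) hzp)]
    linear_combination Q_C.eval z * z ^ (l + m) * main
  linear_combination L - R + LR
end

section
/- (South formula of the CNEWS algorithm.) Under the hypotheses of Wynn's identity — namely, F a field, f a formal power series over F, l ≥ 1, m ≥ 1, normalized normal Padé pairs of types (l, m), (l, m−1), (l, m+1), (l−1, m), (l+1, m) for f with all five denominators nonvanishing at z ∈ F, values C, N, S, E, W as in the compass notation, and N ≠ C, S ≠ C, E ≠ C, W ≠ C — if additionally 1/(E − C) + 1/(W − C) − 1/(N − C) ≠ 0, then S = C + 1/( 1/(E − C) + 1/(W − C) − 1/(N − C) ). -/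
lemma poly_eq_monomial {F : Type*} [Field F] (T : Polynomial F) (K : ℕ)
    (hdeg : T.degree ≤ (K : ℕ)) (h : ∀ k, k < K → T.coeff k = 0) :
    T = Polynomial.C (T.coeff K) * Polynomial.X ^ K := by
  ext j
  rcases lt_trichotomy j K with hj | rfl | hj
  · simp [h j hj, Polynomial.coeff_C_mul, Polynomial.coeff_X_pow, hj.ne]
  · simp
  · rw [Polynomial.coeff_eq_zero_of_degree_lt (lt_of_le_of_lt hdeg (by exact_mod_cast hj))]
    simp [Polynomial.coeff_X_pow, hj.ne']

lemma coeff_mul_left_dvd {F : Type*} [Field F] (A B : PowerSeries F) (K : ℕ)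
    (h : (PowerSeries.X : PowerSeries F) ^ K ∣ A) :
    PowerSeries.coeff K (A * B) =
      PowerSeries.coeff K A * PowerSeries.constantCoeff B := by
  obtain ⟨g, rfl⟩ := h
  rw [mul_assoc]
  have h1 : PowerSeries.coeff K ((PowerSeries.X : PowerSeries F) ^ K * (g * B))
      = PowerSeries.coeff 0 (g * B) := by
    simpa using PowerSeries.coeff_X_pow_mul (g * B) K 0
  have h2 : PowerSeries.coeff K ((PowerSeries.X : PowerSeries F) ^ K * g)
      = PowerSeries.coeff 0 g := by
    simpa using PowerSeries.coeff_X_pow_mul g K 0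
  rw [h1, h2]
  simp [PowerSeries.coeff_zero_eq_constantCoeff]

lemma cross_monomial {F : Type*} [Field F] (f : PowerSeries F)
    (P1 Q1 P2 Q2 : Polynomial F) (K : ℕ)
    (hdeg : (P1 * Q2 - P2 * Q1).degree ≤ (K : ℕ))
    (h1 : (PowerSeries.X : PowerSeries F) ^ K ∣ (f * Q1 - P1))
    (h2 : (PowerSeries.X : PowerSeries F) ^ K ∣ (f * Q2 - P2)) :
    P1 * Q2 - P2 * Q1 =
      Polynomial.C (PowerSeries.coeff K (f * Q2 - P2 : PowerSeries F) * Q1.coeff 0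
        - PowerSeries.coeff K (f * Q1 - P1 : PowerSeries F) * Q2.coeff 0) * Polynomial.X ^ K := by
  have hser : ((P1 * Q2 - P2 * Q1 : Polynomial F) : PowerSeries F)
      = (f * Q2 - P2) * Q1 - (f * Q1 - P1) * Q2 := by
    push_cast
    ring
  have hvan : ∀ k, k < K → (P1 * Q2 - P2 * Q1).coeff k = 0 := by
    intro k hk
    have hdvd : (PowerSeries.X : PowerSeries F) ^ K ∣
        ((f * Q2 - P2) * Q1 - (f * Q1 - P1) * Q2) :=
      dvd_sub (h2.mul_right _) (h1.mul_right _)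
    have := (PowerSeries.X_pow_dvd_iff.mp hdvd) k hk
    rw [← hser] at this
    rw [← Polynomial.coeff_coe]
    exact this
  have hcoeff : (P1 * Q2 - P2 * Q1).coeff K =
      PowerSeries.coeff K (f * Q2 - P2 : PowerSeries F) * Q1.coeff 0
        - PowerSeries.coeff K (f * Q1 - P1 : PowerSeries F) * Q2.coeff 0 := by
    have : PowerSeries.coeff K ((P1 * Q2 - P2 * Q1 : Polynomial F) : PowerSeries F)
        = PowerSeries.coeff K ((f * Q2 - P2) * Q1 : PowerSeries F)
          - PowerSeries.coeff K ((f * Q1 - P1) * Q2 : PowerSeries F) := by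
      rw [hser]; simp
    rw [Polynomial.coeff_coe] at this
    rw [this, coeff_mul_left_dvd _ _ _ h2, coeff_mul_left_dvd _ _ _ h1]
    simp [Polynomial.constantCoeff_coe]
  rw [← hcoeff]
  exact poly_eq_monomial _ _ hdeg hvan

lemma deg_mul_le' {F : Type*} [Field F] (P Q : Polynomial F) (a b c : ℕ)
    (hP : P.degree ≤ (a : ℕ)) (hQ : Q.degree ≤ (b : ℕ)) (h : a + b ≤ c) :
    (P * Q).degree ≤ ((c : ℕ) : WithBot ℕ) := by
  calc (P * Q).degree ≤ P.degree + Q.degree := Polynomial.degree_mul_le _ _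
    _ ≤ ((a : ℕ) : WithBot ℕ) + ((b : ℕ) : WithBot ℕ) := add_le_add hP hQ
    _ ≤ ((c : ℕ) : WithBot ℕ) := by exact_mod_cast h

/-- **South formula of the CNEWS algorithm.** With `C, N, S, E, W` the
values at `z` of normalized normal Padé approximants of types `(l,m)`, `(l,m−1)`,
`(l,m+1)`, `(l+1,m)`, `(l−1,m)` respectively, if all four differences are nonzero then
if moreover `1/(E − C) + 1/(W − C) − 1/(N − C) ≠ 0` then `S = C + 1/(1/(E − C) + 1/(W − C) − 1/(N − C))`. -/
theorem wynn_south_formula (F : Type*) [Field F] (f : PowerSeries F) (l m : ℕ)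
    (hl : 1 ≤ l) (hm : 1 ≤ m)
    (P_C Q_C P_N Q_N P_S Q_S P_E Q_E P_W Q_W : Polynomial F)
    (hC : IsNormalPadePair F f l m P_C Q_C)
    (hN : IsNormalPadePair F f l (m - 1) P_N Q_N)
    (hS : IsNormalPadePair F f l (m + 1) P_S Q_S)
    (hE : IsNormalPadePair F f (l + 1) m P_E Q_E)
    (hW : IsNormalPadePair F f (l - 1) m P_W Q_W)
    (z : F)
    (hzC : Q_C.eval z ≠ 0) (hzN : Q_N.eval z ≠ 0) (hzS : Q_S.eval z ≠ 0)
    (hzE : Q_E.eval z ≠ 0) (hzW : Q_W.eval z ≠ 0)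
    (C N S E W : F)
    (hCdef : C = P_C.eval z / Q_C.eval z)
    (hNdef : N = P_N.eval z / Q_N.eval z)
    (hSdef : S = P_S.eval z / Q_S.eval z)
    (hEdef : E = P_E.eval z / Q_E.eval z)
    (hWdef : W = P_W.eval z / Q_W.eval z)
    (hNC : N ≠ C) (hSC : S ≠ C) (hEC : E ≠ C) (hWC : W ≠ C)
    (hden : 1 / (E - C) + 1 / (W - C) - 1 / (N - C) ≠ 0) :
    S = C + 1 / (1 / (E - C) + 1 / (W - C) - 1 / (N - C)) := by
  obtain ⟨⟨hQCne, hdPC, hdQC, hcondC⟩, hQC0, hrC⟩ := hC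
  obtain ⟨⟨hQNne, hdPN, hdQN, hcondN⟩, hQN0, hrN⟩ := hN
  obtain ⟨⟨hQSne, hdPS, hdQS, hcondS⟩, hQS0, hrS⟩ := hS
  obtain ⟨⟨hQEne, hdPE, hdQE, hcondE⟩, hQE0, hrE⟩ := hE
  obtain ⟨⟨hQWne, hdPW, hdQW, hcondW⟩, hQW0, hrW⟩ := hW
  set rC := PowerSeries.coeff (l + m + 1) (f * (Q_C : PowerSeries F) - (P_C : PowerSeries F)) with hrCdef
  -- normal coefficients for N and W sit at degree l+m
  have hidxN : l + (m - 1) + 1 = l + m := by omega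
  have hidxW : l - 1 + m + 1 = l + m := by omega
  rw [hidxN] at hrN
  rw [hidxW] at hrW
  set rN := PowerSeries.coeff (l + m) (f * (Q_N : PowerSeries F) - (P_N : PowerSeries F)) with hrNdef
  set rW := PowerSeries.coeff (l + m) (f * (Q_W : PowerSeries F) - (P_W : PowerSeries F)) with hrWdef
  -- divisibility facts
  have dC : (PowerSeries.X : PowerSeries F) ^ (l + m + 1) ∣
      (f * (Q_C : PowerSeries F) - (P_C : PowerSeries F)) :=
    PowerSeries.X_pow_dvd_iff.mpr (fun k hk => hcondC k (by omega))
  have dN : (PowerSeries.X : PowerSeries F) ^ (l + m) ∣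
      (f * (Q_N : PowerSeries F) - (P_N : PowerSeries F)) :=
    PowerSeries.X_pow_dvd_iff.mpr (fun k hk => hcondN k (by omega))
  have dW : (PowerSeries.X : PowerSeries F) ^ (l + m) ∣
      (f * (Q_W : PowerSeries F) - (P_W : PowerSeries F)) :=
    PowerSeries.X_pow_dvd_iff.mpr (fun k hk => hcondW k (by omega))
  have dS : (PowerSeries.X : PowerSeries F) ^ (l + m + 2) ∣
      (f * (Q_S : PowerSeries F) - (P_S : PowerSeries F)) :=
    PowerSeries.X_pow_dvd_iff.mpr (fun k hk => hcondS k (by omega))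
  have dE : (PowerSeries.X : PowerSeries F) ^ (l + m + 2) ∣
      (f * (Q_E : PowerSeries F) - (P_E : PowerSeries F)) :=
    PowerSeries.X_pow_dvd_iff.mpr (fun k hk => hcondE k (by omega))
  have dS1 : (PowerSeries.X : PowerSeries F) ^ (l + m + 1) ∣
      (f * (Q_S : PowerSeries F) - (P_S : PowerSeries F)) :=
    dvd_trans (pow_dvd_pow _ (by omega)) dS
  have dE1 : (PowerSeries.X : PowerSeries F) ^ (l + m + 1) ∣
      (f * (Q_E : PowerSeries F) - (P_E : PowerSeries F)) :=
    dvd_trans (pow_dvd_pow _ (by omega)) dE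
  have dS0 : (PowerSeries.X : PowerSeries F) ^ (l + m) ∣
      (f * (Q_S : PowerSeries F) - (P_S : PowerSeries F)) :=
    dvd_trans (pow_dvd_pow _ (by omega)) dS
  have dE0 : (PowerSeries.X : PowerSeries F) ^ (l + m) ∣
      (f * (Q_E : PowerSeries F) - (P_E : PowerSeries F)) :=
    dvd_trans (pow_dvd_pow _ (by omega)) dE
  have dC0 : (PowerSeries.X : PowerSeries F) ^ (l + m) ∣
      (f * (Q_C : PowerSeries F) - (P_C : PowerSeries F)) :=
    dvd_trans (pow_dvd_pow _ (by omega)) dC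
  -- vanishing higher coefficients
  have zC : PowerSeries.coeff (l + m) (f * (Q_C : PowerSeries F) - (P_C : PowerSeries F)) = 0 :=
    hcondC (l + m) le_rfl
  have zE : PowerSeries.coeff (l + m) (f * (Q_E : PowerSeries F) - (P_E : PowerSeries F)) = 0 :=
    hcondE (l + m) (by omega)
  have zE1 : PowerSeries.coeff (l + m + 1) (f * (Q_E : PowerSeries F) - (P_E : PowerSeries F)) = 0 :=
    hcondE (l + m + 1) (by omega)
  have zS : PowerSeries.coeff (l + m) (f * (Q_S : PowerSeries F) - (P_S : PowerSeries F)) = 0 :=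
    hcondS (l + m) (by omega)
  have zS1 : PowerSeries.coeff (l + m + 1) (f * (Q_S : PowerSeries F) - (P_S : PowerSeries F)) = 0 :=
    hcondS (l + m + 1) (by omega)
  -- constant coefficients
  have cC : Q_C.coeff 0 = 1 := by rw [Polynomial.coeff_zero_eq_eval_zero]; exact hQC0
  have cN : Q_N.coeff 0 = 1 := by rw [Polynomial.coeff_zero_eq_eval_zero]; exact hQN0
  have cS : Q_S.coeff 0 = 1 := by rw [Polynomial.coeff_zero_eq_eval_zero]; exact hQS0
  have cE : Q_E.coeff 0 = 1 := by rw [Polynomial.coeff_zero_eq_eval_zero]; exact hQE0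
  have cW : Q_W.coeff 0 = 1 := by rw [Polynomial.coeff_zero_eq_eval_zero]; exact hQW0
  -- the six cross identities, evaluated at z
  have eEC : P_E.eval z * Q_C.eval z - P_C.eval z * Q_E.eval z = rC * z ^ (l + m + 1) := by
    have hmono := cross_monomial f P_E Q_E P_C Q_C (l + m + 1)
      (le_trans (Polynomial.degree_sub_le _ _)
        (max_le (deg_mul_le' _ _ (l+1) m _ hdPE hdQC (by omega))
          (deg_mul_le' _ _ l m _ hdPC hdQE (by omega)))) dE1 dC
    rw [zE1, cC, cE, ← hrCdef] at hmono
    have := congrArg (Polynomial.eval z) hmono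
    simpa using this
  have eSC : P_S.eval z * Q_C.eval z - P_C.eval z * Q_S.eval z = rC * z ^ (l + m + 1) := by
    have hmono := cross_monomial f P_S Q_S P_C Q_C (l + m + 1)
      (le_trans (Polynomial.degree_sub_le _ _)
        (max_le (deg_mul_le' _ _ l m _ hdPS hdQC (by omega))
          (deg_mul_le' _ _ l (m+1) _ hdPC hdQS (by omega)))) dS1 dC
    rw [zS1, cC, cS, ← hrCdef] at hmono
    have := congrArg (Polynomial.eval z) hmono
    simpa using this
  have eNC : P_N.eval z * Q_C.eval z - P_C.eval z * Q_N.eval z = -(rN * z ^ (l + m)) := by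
    have hmono := cross_monomial f P_N Q_N P_C Q_C (l + m)
      (le_trans (Polynomial.degree_sub_le _ _)
        (max_le (deg_mul_le' _ _ l m _ hdPN hdQC (by omega))
          (deg_mul_le' _ _ l (m-1) _ hdPC hdQN (by omega)))) dN dC0
    rw [zC, cC, cN, ← hrNdef] at hmono
    have := congrArg (Polynomial.eval z) hmono
    simp at this
    simpa using this
  have eWC : P_W.eval z * Q_C.eval z - P_C.eval z * Q_W.eval z = -(rW * z ^ (l + m)) := by
    have hmono := cross_monomial f P_W Q_W P_C Q_C (l + m)
      (le_trans (Polynomial.degree_sub_le _ _)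
        (max_le (deg_mul_le' _ _ (l-1) m _ hdPW hdQC (by omega))
          (deg_mul_le' _ _ l m _ hdPC hdQW (by omega)))) dW dC0
    rw [zC, cC, cW, ← hrWdef] at hmono
    have := congrArg (Polynomial.eval z) hmono
    simp at this
    simpa using this
  have eNE : P_N.eval z * Q_E.eval z - P_E.eval z * Q_N.eval z = -(rN * z ^ (l + m)) := by
    have hmono := cross_monomial f P_N Q_N P_E Q_E (l + m)
      (le_trans (Polynomial.degree_sub_le _ _)
        (max_le (deg_mul_le' _ _ l m _ hdPN hdQE (by omega))
          (deg_mul_le' _ _ (l+1) (m-1) _ hdPE hdQN (by omega)))) dN dE0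
    rw [zE, cE, cN, ← hrNdef] at hmono
    have := congrArg (Polynomial.eval z) hmono
    simp at this
    simpa using this
  have eSW : P_S.eval z * Q_W.eval z - P_W.eval z * Q_S.eval z = rW * z ^ (l + m) := by
    have hmono := cross_monomial f P_S Q_S P_W Q_W (l + m)
      (le_trans (Polynomial.degree_sub_le _ _)
        (max_le (deg_mul_le' _ _ l m _ hdPS hdQW (by omega))
          (deg_mul_le' _ _ (l-1) (m+1) _ hdPW hdQS (by omega)))) dS0 dW
    rw [zS, cS, cW, ← hrWdef] at hmono
    have := congrArg (Polynomial.eval z) hmono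
    simpa using this
  -- z is nonzero
  have hz : z ≠ 0 := by
    intro h0
    apply hEC
    rw [hEdef, hCdef]
    rw [h0, zero_pow (by omega : l + m + 1 ≠ 0), mul_zero] at eEC
    rw [div_eq_div_iff hzE hzC]
    rw [h0]
    linear_combination eEC
  have hzl : z ^ (l + m) ≠ 0 := pow_ne_zero _ hz
  -- the two Frobenius-type relations
  have key1 : rN * Q_E.eval z + rC * z * Q_N.eval z = rN * Q_C.eval z := by
    apply mul_left_cancel₀ hzl
    linear_combination (Q_E.eval z) * eNC - (Q_N.eval z) * eEC - (Q_C.eval z) * eNE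
  have key2 : rC * z * Q_W.eval z + rW * Q_S.eval z = rW * Q_C.eval z := by
    apply mul_left_cancel₀ hzl
    linear_combination (Q_C.eval z) * eSW + (Q_S.eval z) * eWC - (Q_W.eval z) * eSC
  -- difference formulas
  have hdE : E - C = rC * z ^ (l + m + 1) / (Q_E.eval z * Q_C.eval z) := by
    rw [hEdef, hCdef]
    field_simp
    linear_combination eEC
  have hdS : S - C = rC * z ^ (l + m + 1) / (Q_S.eval z * Q_C.eval z) := by
    rw [hSdef, hCdef]
    field_simp
    linear_combination eSC
  have hdN : N - C = -(rN * z ^ (l + m)) / (Q_N.eval z * Q_C.eval z) := by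
    rw [hNdef, hCdef]
    field_simp
    linear_combination eNC
  have hdW : W - C = -(rW * z ^ (l + m)) / (Q_W.eval z * Q_C.eval z) := by
    rw [hWdef, hCdef]
    field_simp
    linear_combination eWC
  have hrCne : rC ≠ 0 := hrC
  have hrNne : rN ≠ 0 := hrN
  have hrWne : rW ≠ 0 := hrW
  have huS : rN * rW * Q_S.eval z =
      rN * rW * Q_E.eval z + rW * (rC * z * Q_N.eval z) - rN * (rC * z * Q_W.eval z) := by
    linear_combination rN * key2 - rW * key1
  have t1 : (S - C) * (1 / (E - C)) = Q_E.eval z / Q_S.eval z := by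
    rw [hdS, hdE, one_div_div]
    field_simp
  have t2 : (S - C) * (1 / (W - C)) = -(rC * z * Q_W.eval z) / (rW * Q_S.eval z) := by
    rw [hdS, hdW, one_div_div]
    field_simp
    ring
  have t3 : (S - C) * (1 / (N - C)) = -(rC * z * Q_N.eval z) / (rN * Q_S.eval z) := by
    rw [hdS, hdN, one_div_div]
    field_simp
    ring
  have hkey : (S - C) * (1 / (E - C) + 1 / (W - C) - 1 / (N - C)) = 1 := by
    have hsplit : (S - C) * (1 / (E - C) + 1 / (W - C) - 1 / (N - C))
        = (S - C) * (1 / (E - C)) + (S - C) * (1 / (W - C)) - (S - C) * (1 / (N - C)) := by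
      ring
    rw [hsplit, t1, t2, t3]
    field_simp
    linear_combination (-1 : F) * huS
  have hfin : S - C = 1 / (1 / (E - C) + 1 / (W - C) - 1 / (N - C)) :=
    eq_div_of_mul_eq hden hkey
  linear_combination hfin
end

section
/- (Boundary Wynn identity at the first row of the Padé table.) Let F be a field, f a formal power series over F with coefficients f₀, f₁, f₂, …, let z ∈ F, and for n ∈ ℕ let S_n = Σ_{k=0}^{n} f_k z^k denote the partial sums. Let l ≥ 1 and let (P, Q) be a Padé pair of type (l, 1) for f with Q(0) = 1 and Q(z) ≠ 0, and set r = P(z)/Q(z). If S_{l+1} ≠ S_l, S_{l−1} ≠ S_l, and r ≠ S_l, then 1/(r − S_l) = 1/(S_{l+1} − S_l) + 1/(S_{l−1} − S_l). -/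
/-- **Boundary Wynn identity at the first row of the Padé table.** Let `S n` denote the
partial sums `Σ_{k=0}^{n} f_k z^k`, let `(P, Q)` be a Padé pair of type `(l, 1)` for `f`
with `Q(0) = 1` and `Q(z) ≠ 0`, and let `r = P(z)/Q(z)`. If `S (l+1) ≠ S l`,
`S (l−1) ≠ S l`, and `r ≠ S l`, then
`1/(r − S l) = 1/(S (l+1) − S l) + 1/(S (l−1) − S l)`. -/
theorem boundary_wynn_identity (F : Type*) [Field F] (f : PowerSeries F) (z : F)
    (S : ℕ → F)
    (hSdef : ∀ n : ℕ, S n = ∑ k ∈ Finset.range (n + 1), PowerSeries.coeff k f * z ^ k)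
    (l : ℕ) (hl : 1 ≤ l)
    (P Q : Polynomial F) (hPQ : IsPadePair F f l 1 P Q)
    (hQ0 : Q.eval 0 = 1) (hQz : Q.eval z ≠ 0)
    (r : F) (hr : r = P.eval z / Q.eval z)
    (h1 : S (l + 1) ≠ S l) (h2 : S (l - 1) ≠ S l) (h3 : r ≠ S l) :
    1 / (r - S l) = 1 / (S (l + 1) - S l) + 1 / (S (l - 1) - S l) := by
  obtain ⟨hQne, hPdeg, hQdeg, hcoeff⟩ := hPQ
  set c : ℕ → F := fun k => PowerSeries.coeff k f with hc
  set q : F := Q.coeff 1 with hq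
  have hQ0' : Q.coeff 0 = 1 := by rw [Polynomial.coeff_zero_eq_eval_zero, hQ0]
  have hQrep : Q = Polynomial.C q * Polynomial.X + Polynomial.C 1 := by
    conv_lhs => rw [Polynomial.eq_X_add_C_of_degree_le_one hQdeg]
    rw [hQ0']
  have hQev : Q.eval z = 1 + q * z := by rw [hQrep]; simp; ring
  -- coefficients of f * Q
  have hQps : (Q : PowerSeries F) = PowerSeries.C q * PowerSeries.X + 1 := by
    rw [hQrep]; push_cast; rw [map_one]
  have hfQ : ∀ k : ℕ, PowerSeries.coeff (k+1) (f * (Q : PowerSeries F)) = c (k+1) + q * c k := by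
    intro k
    rw [hQps, mul_add, mul_one, map_add, show f * (PowerSeries.C q * PowerSeries.X)
      = f * PowerSeries.C q * PowerSeries.X by ring, PowerSeries.coeff_succ_mul_X,
      PowerSeries.coeff_mul_C]
    ring
  -- coefficients of P
  have hPnat : P.natDegree ≤ l := Polynomial.natDegree_le_iff_degree_le.mpr hPdeg
  have hPc : ∀ k : ℕ, k ≤ l + 1 → (P.coeff k : F) = PowerSeries.coeff k (f * (Q : PowerSeries F)) := by
    intro k hk
    have := hcoeff k hk
    rw [map_sub, sub_eq_zero] at this
    rw [← Polynomial.coeff_coe]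
    exact this.symm
  -- key relation at degree l+1
  have hkey : c (l + 1) + q * c l = 0 := by
    have h0 : P.coeff (l + 1) = 0 :=
      Polynomial.coeff_eq_zero_of_degree_lt (lt_of_le_of_lt hPdeg (by exact_mod_cast Nat.lt_succ_self l))
    have := hPc (l + 1) le_rfl
    rw [h0, hfQ l] at this
    exact this.symm
  -- evaluate P at z
  have hPev : P.eval z = S l + q * z * S (l - 1) := by
    rw [Polynomial.eval_eq_sum_range' (lt_of_le_of_lt hPnat (Nat.lt_succ_self l)) z]
    have hsum : ∀ k ∈ Finset.range (l + 1), P.coeff k * z ^ k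
        = PowerSeries.coeff k (f * (Q : PowerSeries F)) * z ^ k := by
      intro k hk
      rw [hPc k (le_trans (Nat.le_of_lt_succ (Finset.mem_range.mp hk)) (Nat.le_succ l))]
    rw [Finset.sum_congr rfl hsum, Finset.sum_range_succ']
    have hfQ0 : PowerSeries.coeff 0 (f * (Q : PowerSeries F)) = c 0 := by
      rw [hQps, mul_add, mul_one, map_add, show f * (PowerSeries.C q * PowerSeries.X)
        = f * PowerSeries.C q * PowerSeries.X by ring]
      simp [PowerSeries.coeff_zero_eq_constantCoeff, hc]
    simp only [hfQ, hfQ0]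
    have hl1 : l - 1 + 1 = l := Nat.succ_pred_eq_of_pos hl
    rw [hSdef (l-1), hSdef l, hl1, Finset.sum_range_succ' (fun k => c k * z ^ k) l]
    simp only [hc]
    have split : ∀ i ∈ Finset.range l,
        (PowerSeries.coeff (i+1) f + q * PowerSeries.coeff i f) * z ^ (i + 1)
          = PowerSeries.coeff (i+1) f * z ^ (i+1)
            + q * z * (PowerSeries.coeff i f * z ^ i) := by
      intro i _; ring
    rw [Finset.sum_congr rfl split, Finset.sum_add_distrib, Finset.mul_sum]
    ring
  -- the differences
  have hA : S (l + 1) - S l = c (l + 1) * z ^ (l + 1) := by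
    rw [hSdef (l+1), hSdef l, Finset.sum_range_succ]; ring
  have hB : S (l - 1) - S l = -(c l * z ^ l) := by
    have hl1 : l - 1 + 1 = l := Nat.succ_pred_eq_of_pos hl
    rw [hSdef (l-1), hSdef l, hl1, Finset.sum_range_succ]; ring
  -- q z B = A
  have hqzB : q * z * (S (l - 1) - S l) = S (l + 1) - S l := by
    rw [hA, hB]
    linear_combination (-(z ^ (l + 1))) * hkey
  -- r - S l
  have hQev' : (1 : F) + q * z ≠ 0 := by rw [← hQev]; exact hQz
  have hrs : r - S l = (S (l + 1) - S l) / Q.eval z := by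
    rw [hr, hPev, ← hqzB, hQev]
    field_simp
    ring
  rw [hrs]
  have hAne : S (l + 1) - S l ≠ 0 := sub_ne_zero_of_ne h1
  have hBne : S (l - 1) - S l ≠ 0 := sub_ne_zero_of_ne h2
  rw [one_div_div, hQev]
  field_simp
  linear_combination hqzB
end

section
/- (Shanks/Aitken-Δ² form of the [l/1] Padé value.) Let F be a field, f a formal power series over F with coefficients f₀, f₁, f₂, …, let z ∈ F, and for n ∈ ℕ let S_n = Σ_{k=0}^{n} f_k z^k. Let l ≥ 1 and let (P, Q) be a Padé pair of type (l, 1) for f with Q(0) = 1 and Q(z) ≠ 0, and set r = P(z)/Q(z). If S_{l+1} ≠ S_l, S_{l−1} ≠ S_l, r ≠ S_l, and S_{l+1} + S_{l−1} − 2 S_l ≠ 0, then r = (S_{l+1} · S_{l−1} − S_l²) / (S_{l+1} + S_{l−1} − 2 S_l). -/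
/-- **Shanks/Aitken-Δ² form of the `[l/1]` Padé value.** Let `S n` denote the partial
sums `Σ_{k=0}^{n} f_k z^k`, let `(P, Q)` be a Padé pair of type `(l, 1)` for `f` with
`Q(0) = 1` and `Q(z) ≠ 0`, and let `r = P(z)/Q(z)`. If `S (l+1) ≠ S l`, `S (l−1) ≠ S l`,
`r ≠ S l`, and `S (l+1) + S (l−1) − 2·S l ≠ 0`, then
`r = (S (l+1) · S (l−1) − (S l)²) / (S (l+1) + S (l−1) − 2·S l)`. -/
theorem shanks_aitken_delta_sq (F : Type*) [Field F] (f : PowerSeries F) (z : F)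
    (S : ℕ → F)
    (hSdef : ∀ n : ℕ, S n = ∑ k ∈ Finset.range (n + 1), PowerSeries.coeff k f * z ^ k)
    (l : ℕ) (hl : 1 ≤ l)
    (P Q : Polynomial F) (hPQ : IsPadePair F f l 1 P Q)
    (hQ0 : Q.eval 0 = 1) (hQz : Q.eval z ≠ 0)
    (r : F) (hr : r = P.eval z / Q.eval z)
    (h1 : S (l + 1) ≠ S l) (h2 : S (l - 1) ≠ S l) (h3 : r ≠ S l)
    (h4 : S (l + 1) + S (l - 1) - 2 * S l ≠ 0) :
    r = (S (l + 1) * S (l - 1) - (S l) ^ 2) / (S (l + 1) + S (l - 1) - 2 * S l) := by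
  obtain ⟨hQne, hdegP, hdegQ, hcoef⟩ := hPQ
  set q : F := Q.coeff 1 with hq
  have hQc0 : Q.coeff 0 = 1 := by
    rwa [Polynomial.coeff_zero_eq_eval_zero]
  -- Q = C 1 + C q * X
  have hQeq : Q = 1 + Polynomial.C q * Polynomial.X := by
    have hnd : Q.natDegree ≤ 1 := Polynomial.natDegree_le_iff_degree_le.2 hdegQ
    ext n
    match n with
    | 0 => simp [hQc0, Polynomial.coeff_one]
    | 1 => simp [hq, Polynomial.coeff_one]
    | (n+2) =>
      rw [Polynomial.coeff_eq_zero_of_natDegree_lt (lt_of_le_of_lt hnd (by omega))]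
      simp [Polynomial.coeff_one]
  have hndP : P.natDegree ≤ l := Polynomial.natDegree_le_iff_degree_le.2 hdegP
  -- coefficient formula for f * Q
  have hmul : ∀ k : ℕ, PowerSeries.coeff (k + 1) (f * (Q : PowerSeries F)) =
      PowerSeries.coeff (k + 1) f + q * PowerSeries.coeff k f := by
    intro k
    rw [hQeq]
    simp only [Polynomial.coe_add, Polynomial.coe_mul, Polynomial.coe_C, Polynomial.coe_X,
      Polynomial.coe_one]
    rw [mul_add, mul_one, map_add]
    congr 1
    have he : f * (PowerSeries.C q * PowerSeries.X) =
        f * PowerSeries.X * PowerSeries.C q := by ring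
    rw [he, PowerSeries.coeff_mul_C, PowerSeries.coeff_succ_mul_X, mul_comm]
  have hmul0 : PowerSeries.coeff 0 (f * (Q : PowerSeries F)) = PowerSeries.coeff 0 f := by
    rw [hQeq]
    simp only [Polynomial.coe_add, Polynomial.coe_mul, Polynomial.coe_C, Polynomial.coe_X,
      Polynomial.coe_one]
    rw [mul_add, mul_one, map_add]
    have he : f * (PowerSeries.C q * PowerSeries.X) =
        f * PowerSeries.X * PowerSeries.C q := by ring
    rw [he, PowerSeries.coeff_mul_C, PowerSeries.coeff_zero_mul_X]
    simp
  -- P coefficients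
  have hPc : ∀ k : ℕ, k ≤ l + 1 →
      P.coeff k = PowerSeries.coeff k (f * (Q : PowerSeries F)) := by
    intro k hk
    have := hcoef k hk
    rw [map_sub, sub_eq_zero] at this
    rw [this, Polynomial.coeff_coe]

  have hfl1 : PowerSeries.coeff (l + 1) f = - (q * PowerSeries.coeff l f) := by
    have h0 : P.coeff (l + 1) = 0 :=
      Polynomial.coeff_eq_zero_of_natDegree_lt (by omega)
    have := hPc (l + 1) le_rfl
    rw [h0, hmul l] at this
    linear_combination -this
  -- evaluate Q at z
  have hQzval : Q.eval z = 1 + q * z := by rw [hQeq]; simp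
  -- evaluate P at z
  have hPz : P.eval z = S l + q * z * S (l - 1) := by
    rw [Polynomial.eval_eq_sum_range' (Nat.lt_succ_of_le hndP)]
    have : ∀ k ∈ Finset.range (l + 1), P.coeff k * z ^ k =
        PowerSeries.coeff k (f * (Q : PowerSeries F)) * z ^ k := by
      intro k hk
      rw [hPc k (by simp at hk; omega)]
    rw [Finset.sum_congr rfl this, Finset.sum_range_succ']
    have hstep : ∀ k ∈ Finset.range l,
        PowerSeries.coeff (k + 1) (f * (Q : PowerSeries F)) * z ^ (k + 1) =
        PowerSeries.coeff (k + 1) f * z ^ (k + 1) +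
          q * z * (PowerSeries.coeff k f * z ^ k) := by
      intro k _
      rw [hmul k]; ring
    rw [Finset.sum_congr rfl hstep, Finset.sum_add_distrib, ← Finset.mul_sum, hmul0]
    have hl' : l - 1 + 1 = l := by omega
    rw [hSdef l, hSdef (l - 1), hl', Finset.sum_range_succ']
    simp
    ring
  -- key recurrence: S (l+1) = S l - q z (S l - S (l-1))
  have hSl1 : S (l + 1) = S l - q * z * (S l - S (l - 1)) := by
    have e1 : S (l + 1) = S l + PowerSeries.coeff (l + 1) f * z ^ (l + 1) := by
      rw [hSdef (l + 1), hSdef l, Finset.sum_range_succ]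
    have e2 : S l = S (l - 1) + PowerSeries.coeff l f * z ^ l := by
      have hl' : l - 1 + 1 = l := by omega
      rw [hSdef l, hSdef (l - 1), hl', ← hl']
      rw [Finset.sum_range_succ, hl']
    have e3 : PowerSeries.coeff (l + 1) f * z ^ (l + 1) =
        - (q * z * (PowerSeries.coeff l f * z ^ l)) := by
      rw [hfl1]; ring
    rw [e1, e3,
      show PowerSeries.coeff l f * z ^ l = S l - S (l - 1) from by linear_combination -e2]
    ring
  -- conclude by field arithmetic
  rw [hr, hPz, hQzval]
  rw [hQzval] at hQz
  rw [div_eq_div_iff hQz h4]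
  have key := hSl1
  set a := S (l - 1)
  set b := S l
  set c := S (l + 1)
  set t := q * z
  rw [key]
  ring
end
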